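/- arXiv:1704.02290 — 7 statements merged into one kernel-verified Lean document; each statement's English description precedes it below -/
import Mathlib

section
/- For all natural numbers n ≥ 0, the Euler number E_n satisfies E_n = ∑_{l=0}^n S_2(n,l) · 2^{-l} · l! · (-1)^l, where S_2(n,l) is the Stirling number of the second kind. -/
open Finset

/-- Stirling numbers of the second kind. -/
def S2 : ℕ → ℕ → ℕ
  | 0, 0 => 1
  | 0, _ + 1 => 0
  | _ + 1, 0 => 0
  | n + 1, k + 1 => (k + 1) * S2 n (k + 1) + S2 n k

lemma S2_zero_right (n : ℕ) : S2 (n + 1) 0 = 0 := rfl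

lemma S2_eq_zero_of_lt : ∀ n l, n < l → S2 n l = 0 := by
  intro n
  induction n with
  | zero => intro l hl; match l, hl with | l + 1, _ => rfl
  | succ n ih =>
    intro l hl
    match l, hl with
    | l + 1, hl =>
      show (l + 1) * S2 n (l + 1) + S2 n l = 0
      rw [ih (l + 1) (by omega), ih l (by omega)]
      ring

lemma S2_key : ∀ n l, ∑ k ∈ range (n + 1), n.choose k * S2 k l = S2 (n + 1) (l + 1) := by
  intro n
  induction n with
  | zero =>
    intro l
    have h0 : S2 0 (l + 1) = 0 := rfl
    show ∑ k ∈ range 1, Nat.choose 0 k * S2 k l = (l + 1) * S2 0 (l + 1) + S2 0 l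
    rw [h0]
    simp
  | succ n ih =>
    intro l
    rw [Finset.sum_range_succ']
    have h1 : ∀ k, (n + 1).choose (k + 1) = n.choose k + n.choose (k + 1) :=
      fun k => Nat.choose_succ_succ n k
    have hsplit : ∑ k ∈ range (n + 1), (n + 1).choose (k + 1) * S2 (k + 1) l
        = (∑ k ∈ range (n + 1), n.choose k * S2 (k + 1) l)
          + ∑ k ∈ range (n + 1), n.choose (k + 1) * S2 (k + 1) l := by
      rw [← Finset.sum_add_distrib]
      exact Finset.sum_congr rfl fun k _ => by rw [h1]; ring
    rw [hsplit]
    have h2 : (∑ k ∈ range (n + 1), n.choose (k + 1) * S2 (k + 1) l)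
        + (n + 1).choose 0 * S2 0 l = S2 (n + 1) (l + 1) := by
      have : (∑ k ∈ range (n + 1), n.choose (k + 1) * S2 (k + 1) l)
          + (n + 1).choose 0 * S2 0 l
          = ∑ k ∈ range (n + 2), n.choose k * S2 k l := by
        rw [Finset.sum_range_succ' (fun k => n.choose k * S2 k l) (n + 1)]
        simp
      rw [this, Finset.sum_range_succ, Nat.choose_succ_self, zero_mul, add_zero, ih]
    match l with
    | 0 =>
      have hz : ∀ k, S2 (k + 1) 0 = 0 := fun k => rfl
      simp only [hz, mul_zero, Finset.sum_const_zero, zero_add] at h2 ⊢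
      rw [h2]
      show S2 (n + 1) 1 = 1 * S2 (n + 1) 1 + S2 (n + 1) 0
      rw [S2_zero_right]; ring
    | m + 1 =>
      have h3 : ∑ k ∈ range (n + 1), n.choose k * S2 (k + 1) (m + 1)
          = (m + 1) * S2 (n + 1) (m + 2) + S2 (n + 1) (m + 1) := by
        have : ∀ k, n.choose k * S2 (k + 1) (m + 1)
            = (m + 1) * (n.choose k * S2 k (m + 1)) + n.choose k * S2 k m := by
          intro k
          show n.choose k * ((m + 1) * S2 k (m + 1) + S2 k m) = _
          ring
        rw [Finset.sum_congr rfl fun k _ => this k, Finset.sum_add_distrib,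
          ← Finset.mul_sum, ih, ih]
      rw [h3, add_assoc, h2]
      show (m + 1) * S2 (n + 1) (m + 2) + S2 (n + 1) (m + 1) + S2 (n + 1) (m + 2)
          = (m + 2) * S2 (n + 1) (m + 2) + S2 (n + 1) (m + 1)
      ring

def c (l : ℕ) : ℚ := ((2 : ℚ)⁻¹) ^ l * (l.factorial : ℚ) * (-1) ^ l

lemma c_succ (l : ℕ) : ((l : ℚ) + 1) * c l = -2 * c (l + 1) := by
  simp only [c, pow_succ, Nat.factorial_succ]
  push_cast
  ring

noncomputable def F (n : ℕ) : ℚ := ∑ l ∈ range (n + 1), (S2 n l : ℚ) * c l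

lemma F_ext {n k : ℕ} (hk : k ≤ n) :
    F k = ∑ l ∈ range (n + 1), (S2 k l : ℚ) * c l := by
  unfold F
  apply Finset.sum_subset
  · intro x hx
    simp only [Finset.mem_range] at *
    omega
  · intro x _ hx
    simp only [Finset.mem_range, not_lt] at hx
    rw [S2_eq_zero_of_lt k x (by omega)]
    simp

lemma Frec (n : ℕ) : F n + ∑ k ∈ range (n + 1), (n.choose k : ℚ) * F k =
    if n = 0 then 2 else 0 := by
  have hswap : ∑ k ∈ range (n + 1), (n.choose k : ℚ) * F k
      = ∑ l ∈ range (n + 1), (S2 (n + 1) (l + 1) : ℚ) * c l := by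
    have h1 : ∀ k ∈ range (n + 1), (n.choose k : ℚ) * F k
        = ∑ l ∈ range (n + 1), (n.choose k : ℚ) * ((S2 k l : ℚ) * c l) := by
      intro k hk
      rw [F_ext (Finset.mem_range.mp hk |> Nat.lt_succ_iff.mp), Finset.mul_sum]
    rw [Finset.sum_congr rfl h1, Finset.sum_comm]
    refine Finset.sum_congr rfl fun l _ => ?_
    have : ∑ k ∈ range (n + 1), (n.choose k : ℚ) * ((S2 k l : ℚ) * c l)
        = (∑ k ∈ range (n + 1), ((n.choose k * S2 k l : ℕ) : ℚ)) * c l := by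
      rw [Finset.sum_mul]
      refine Finset.sum_congr rfl fun k _ => ?_
      push_cast
      ring
    rw [this, ← Nat.cast_sum, S2_key]
  rw [hswap]
  have hrec : ∀ l, (S2 (n + 1) (l + 1) : ℚ)
      = ((l : ℚ) + 1) * (S2 n (l + 1) : ℚ) + (S2 n l : ℚ) := by
    intro l
    show ((((l + 1) * S2 n (l + 1) + S2 n l : ℕ)) : ℚ) = _
    push_cast
    ring
  have hsum : ∑ l ∈ range (n + 1), (S2 (n + 1) (l + 1) : ℚ) * c l
      = (∑ l ∈ range (n + 1), (S2 n (l + 1) : ℚ) * (-2 * c (l + 1))) + F n := by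
    unfold F
    rw [← Finset.sum_add_distrib]
    refine Finset.sum_congr rfl fun l _ => ?_
    rw [hrec l, ← c_succ]
    ring
  rw [hsum]
  have hshift : ∑ l ∈ range (n + 1), (S2 n (l + 1) : ℚ) * (-2 * c (l + 1))
      = -2 * (F n - (S2 n 0 : ℚ)) := by
    have e1 : ∑ l ∈ range (n + 2), (S2 n l : ℚ) * (-2 * c l)
        = (∑ l ∈ range (n + 1), (S2 n (l + 1) : ℚ) * (-2 * c (l + 1)))
          + (S2 n 0 : ℚ) * (-2 * c 0) := Finset.sum_range_succ' _ _
    have e2 : ∑ l ∈ range (n + 2), (S2 n l : ℚ) * (-2 * c l) = -2 * F n := by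
      rw [Finset.sum_range_succ, S2_eq_zero_of_lt n (n + 1) (by omega)]
      unfold F
      rw [Finset.mul_sum]
      simp only [Nat.cast_zero, zero_mul, add_zero]
      exact Finset.sum_congr rfl fun l _ => by ring
    have hc0 : c 0 = 1 := by simp [c]
    rw [e2, hc0] at e1
    linarith
  rw [hshift]
  have hS20 : (S2 n 0 : ℚ) = if n = 0 then 1 else 0 := by
    match n with
    | 0 => rfl
    | m + 1 => simp [S2_zero_right]
  rw [hS20]
  by_cases h : n = 0 <;> simp [h] <;> ring

/-- If `E` is the sequence of Euler numbers, i.e. the coefficients of the exponential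
generating function `2/(e^t+1)`, equivalently `(e^t+1) · ∑ E_n t^n/n! = 2`, then
`E_n = ∑_{l=0}^n S_2(n,l) 2^{-l} l! (-1)^l`. -/
theorem stmt0 (E : ℕ → ℚ)
    (hE : ∀ n : ℕ, E n + ∑ k ∈ range (n + 1), (n.choose k : ℚ) * E k =
      if n = 0 then 2 else 0) :
    ∀ n : ℕ, E n =
      ∑ l ∈ range (n + 1), (S2 n l : ℚ) * ((2 : ℚ)⁻¹) ^ l * (l.factorial : ℚ) * (-1) ^ l := by
  have key : ∀ n, E n = F n := by
    intro n
    induction n using Nat.strong_induction_on with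
    | _ n ih =>
      have h1 := hE n
      have h2 := Frec n
      rw [Finset.sum_range_succ] at h1 h2
      have hsum : ∑ k ∈ range n, (n.choose k : ℚ) * E k
          = ∑ k ∈ range n, (n.choose k : ℚ) * F k := by
        refine Finset.sum_congr rfl fun k hk => ?_
        rw [ih k (Finset.mem_range.mp hk)]
      rw [hsum, Nat.choose_self] at h1
      rw [Nat.choose_self] at h2
      push_cast at h1 h2
      linarith
  intro n
  rw [key n]
  unfold F c
  exact Finset.sum_congr rfl fun l _ => by ring
end

section
/- For natural numbers n ≥ k, the degenerate Stirling polynomial of the second kind satisfies S_{2,λ}(n,k|x) = (n!/k!) ∑_{l=0}^k C(k,l) (-1)^{k-l} binom_λ(l+x, n), where binom_λ(y,n) = y(y-λ)(y-2λ)⋯(y-(n-1)λ)/n!. Moreover, for n < k this alternating sum vanishes: ∑_{l=0}^k C(k,l)(-1)^{k-l} binom_λ(l+x,n) = 0. -/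
open Finset PowerSeries

/-- The λ-binomial coefficient `binom_λ(y,n) = y(y-λ)(y-2λ)⋯(y-(n-1)λ)/n!`. -/
noncomputable def dbinom (lam y : ℝ) (n : ℕ) : ℝ :=
  (∏ i ∈ range n, (y - i * lam)) / n.factorial

/-- `(1 + λt)^{y/λ}` as a formal power series: `∑_n binom_λ(y,n) t^n`. -/
noncomputable def degExp (lam y : ℝ) : PowerSeries ℝ :=
  PowerSeries.mk fun n => dbinom lam y n

/-!
By the Chu–Vandermonde identity for the λ-falling factorial, `y ↦ degExp λ y` turns sums into
products, so the binomial theorem gives `(degExp λ 1 - 1)^k = ∑_l C(k,l)(-1)^{k-l} degExp λ l`;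
multiplying by `degExp λ x` and reading off the `n`-th coefficient gives the formula. For `n < k`
the coefficient vanishes because `degExp λ 1 - 1` has zero constant term.
-/

/-- The λ-falling factorial `(y)_{n,λ}`. -/
def degFallingFactorial (lam y : ℝ) (n : ℕ) : ℝ := ∏ i ∈ range n, (y - i * lam)

lemma degFallingFactorial_succ (lam y : ℝ) (n : ℕ) :
    degFallingFactorial lam y (n + 1) = degFallingFactorial lam y n * (y - n * lam) :=
  prod_range_succ _ _

lemma dbinom_eq_degFallingFactorial_div (lam y : ℝ) (n : ℕ) :
    dbinom lam y n = degFallingFactorial lam y n / n.factorial := rfl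

theorem degFallingFactorial_add (lam x y : ℝ) (n : ℕ) :
    degFallingFactorial lam (x + y) n = ∑ ij ∈ antidiagonal n,
      (n.choose ij.1 : ℝ) * (degFallingFactorial lam x ij.1 * degFallingFactorial lam y ij.2) := by
  induction n with
  | zero => simp [degFallingFactorial]
  | succ n ih =>
    rw [degFallingFactorial_succ, ih, sum_mul, sum_antidiagonal_choose_succ_mul
      (fun i j => degFallingFactorial lam x i * degFallingFactorial lam y j), ← sum_add_distrib]
    refine sum_congr rfl fun ij hij => ?_
    rw [HasAntidiagonal.mem_antidiagonal] at hij
    -- `x + y - nλ = (x - iλ) + (y - jλ)` and `C(n,i) = C(n,j)` when `i + j = n`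
    rw [degFallingFactorial_succ, degFallingFactorial_succ, Nat.choose_symm_of_eq_add hij.symm,
      ← hij]
    push_cast
    ring

theorem degExp_add (lam x y : ℝ) : degExp lam (x + y) = degExp lam x * degExp lam y := by
  ext n
  simp only [coeff_mul, degExp, coeff_mk, dbinom_eq_degFallingFactorial_div,
    degFallingFactorial_add, sum_div]
  refine sum_congr rfl fun ij hij => ?_
  rw [HasAntidiagonal.mem_antidiagonal] at hij
  have hfac : ((n.choose ij.1 * ij.1.factorial * ij.2.factorial : ℕ) : ℝ) = n.factorial := by
    rw [← hij, Nat.choose_symm_add, Nat.add_choose_mul_factorial_mul_factorial]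
  have hchoose : (n.choose ij.1 : ℝ) ≠ 0 := by
    exact_mod_cast (Nat.choose_pos (by omega)).ne'
  push_cast at hfac
  rw [← hfac]
  field_simp

@[simp]
theorem degExp_zero (lam : ℝ) : degExp lam 0 = 1 := by
  ext n
  rcases n with _ | n
  · simp [degExp, dbinom]
  · simp [degExp, dbinom, coeff_one, prod_range_succ']

theorem degExp_one_pow (lam : ℝ) (l : ℕ) : degExp lam 1 ^ l = degExp lam l := by
  induction l with
  | zero => simp
  | succ l ih => rw [pow_succ, ih, ← degExp_add, Nat.cast_succ]

theorem degExp_mul_degExp_one_sub_one_pow (lam x : ℝ) (k : ℕ) :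
    degExp lam x * (degExp lam 1 - 1) ^ k =
      ∑ l ∈ range (k + 1), ((k.choose l : ℝ) * (-1) ^ (k - l)) • degExp lam (l + x) := by
  rw [sub_eq_add_neg, add_pow, mul_sum]
  refine sum_congr rfl fun l _ => ?_
  rw [degExp_one_pow, degExp_add, smul_eq_C_mul]
  simp only [map_mul, map_pow, map_neg, map_one, map_natCast]
  ring

theorem coeff_degExp_mul_degExp_one_sub_one_pow (lam x : ℝ) (k n : ℕ) :
    coeff n (degExp lam x * (degExp lam 1 - 1) ^ k) =
      ∑ l ∈ range (k + 1), (k.choose l : ℝ) * (-1) ^ (k - l) * dbinom lam (l + x) n := by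
  rw [degExp_mul_degExp_one_sub_one_pow, map_sum]
  simp [degExp]

theorem X_pow_dvd_degExp_mul_degExp_one_sub_one_pow (lam x : ℝ) (k : ℕ) :
    X ^ k ∣ degExp lam x * (degExp lam 1 - 1) ^ k :=
  Dvd.dvd.mul_left (pow_dvd_pow_of_dvd (X_dvd_iff.mpr (by simp [degExp, dbinom])) k) _

theorem stmt3_general (lam x : ℝ) (k : ℕ) (S : ℕ → ℝ)
    (hS : degExp lam x * (degExp lam 1 - 1) ^ k =
      (k.factorial : ℝ) • PowerSeries.mk (fun n => S n / n.factorial)) :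
    ∀ n : ℕ,
      (k ≤ n → S n = (n.factorial : ℝ) / (k.factorial : ℝ) *
        ∑ l ∈ range (k + 1), (k.choose l : ℝ) * (-1) ^ (k - l) * dbinom lam (l + x) n) ∧
      (n < k →
        ∑ l ∈ range (k + 1), (k.choose l : ℝ) * (-1) ^ (k - l) * dbinom lam (l + x) n = 0) := by
  intro n
  rw [← coeff_degExp_mul_degExp_one_sub_one_pow]
  refine ⟨fun _ => ?_, fun hnk => ?_⟩
  · rw [hS, map_smul, coeff_mk, smul_eq_mul]
    field_simp
  · exact X_pow_dvd_iff.mp (X_pow_dvd_degExp_mul_degExp_one_sub_one_pow lam x k) n hnk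

/-- If `S` is the sequence of degenerate Stirling polynomials of the second kind at `x`,
defined by `(1/k!)(1+λt)^{x/λ}((1+λt)^{1/λ}-1)^k = ∑_n S_n t^n/n!`, then for `n ≥ k`,
`S n = (n!/k!) ∑_{l=0}^k C(k,l)(-1)^{k-l} binom_λ(l+x,n)`, and for `n < k` the
alternating sum `∑_{l=0}^k C(k,l)(-1)^{k-l} binom_λ(l+x,n)` vanishes. -/
theorem stmt3 (lam x : ℝ) (hlam : lam ≠ 0) (k : ℕ) (S : ℕ → ℝ)
    (hS : degExp lam x * (degExp lam 1 - 1) ^ k =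
      (k.factorial : ℝ) • PowerSeries.mk (fun n => S n / n.factorial)) :
    ∀ n : ℕ,
      (k ≤ n → S n = (n.factorial : ℝ) / (k.factorial : ℝ) *
        ∑ l ∈ range (k + 1), (k.choose l : ℝ) * (-1) ^ (k - l) * dbinom lam (l + x) n) ∧
      (n < k →
        ∑ l ∈ range (k + 1), (k.choose l : ℝ) * (-1) ^ (k - l) * dbinom lam (l + x) n = 0) :=
  stmt3_general lam x k S hS
end

section
/- For 1 ≤ k ≤ n, the degenerate Stirling polynomials of the second kind satisfy the recurrence S_{2,λ}(n+1,k|x) = (x+k) S_{2,λ}(n,k|x) + S_{2,λ}(n,k-1|x) − nλ S_{2,λ}(n,k|x). -/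
open Finset

/-- Degenerate Stirling polynomials of the second kind:
`S_{2,λ}(n,k|x) = (n!/k!) ∑_{l=0}^k C(k,l)(-1)^{k-l} binom_λ(l+x,n)`
(this expression vanishes when `n < k`). -/
noncomputable def S2deg (lam : ℝ) (n k : ℕ) (x : ℝ) : ℝ :=
  (n.factorial : ℝ) / (k.factorial : ℝ) *
    ∑ l ∈ range (k + 1), (k.choose l : ℝ) * (-1) ^ (k - l) * dbinom lam (l + x) n

/-! The inner sum of `S_{2,λ}(n,k|x)` is the `k`-th forward difference of `y ↦ binom_λ(y,n)` at `x`.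
Since `(n+1) binom_λ(y,n+1) = (y - nλ) binom_λ(y,n)`, the recurrence reduces to a Leibniz rule for
multiplying by the linear factor `l + c` inside an alternating binomial sum, which in turn rests on
`C(k+1,l) (k+1-l) = (k+1) C(k,l)`. -/

section AltChooseSum

variable {R : Type*} [CommRing R]

def altChooseSum (k : ℕ) (f : ℕ → R) : R :=
  ∑ l ∈ range (k + 1), (k.choose l : R) * (-1) ^ (k - l) * f l

lemma altChooseSum_succ_sub_mul (m : ℕ) (f : ℕ → R) :
    altChooseSum (m + 1) (fun l => ((l : R) - (m + 1)) * f l) = (m + 1) * altChooseSum m f := by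
  rw [altChooseSum, sum_range_succ, altChooseSum, mul_sum]
  simp only [Nat.cast_add, Nat.cast_one, sub_self, zero_mul, mul_zero, add_zero]
  refine sum_congr rfl fun l hl => ?_
  have hlm : l ≤ m := Nat.lt_succ_iff.mp (mem_range.mp hl)
  have hchoose : ((m + 1).choose l : R) * (m + 1 - l) = (m + 1) * m.choose l := by
    have h : (m + 1).choose l * (m + 1 - l) = (m + 1) * m.choose l := by
      rw [← Nat.choose_mul_succ_eq, mul_comm]
    have := congrArg (Nat.cast (R := R)) h
    push_cast [Nat.cast_sub (show l ≤ m + 1 by omega)] at this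
    exact this
  rw [show m + 1 - l = m - l + 1 by omega, pow_succ]
  linear_combination (-1 : R) ^ (m - l) * f l * hchoose

lemma altChooseSum_succ_add_mul (m : ℕ) (c : R) (f : ℕ → R) :
    altChooseSum (m + 1) (fun l => ((l : R) + c) * f l) =
      (m + 1 + c) * altChooseSum (m + 1) f + (m + 1) * altChooseSum m f := by
  rw [← altChooseSum_succ_sub_mul, altChooseSum, altChooseSum, altChooseSum, mul_sum,
    ← sum_add_distrib]
  exact sum_congr rfl fun l _ => by ring

end AltChooseSum

lemma dbinom_succ (lam y : ℝ) (n : ℕ) :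
    dbinom lam y (n + 1) = (y - n * lam) * dbinom lam y n / (n + 1) := by
  rw [dbinom, dbinom, prod_range_succ, Nat.factorial_succ]
  push_cast
  field_simp
  simp only [mul_comm lam]
  ring

lemma S2deg_eq_altChooseSum (lam : ℝ) (n k : ℕ) (x : ℝ) :
    S2deg lam n k x = n.factorial / k.factorial * altChooseSum k (fun l => dbinom lam (l + x) n) :=
  rfl

theorem stmt7_general (lam x : ℝ) (n k : ℕ) (hk : 1 ≤ k) :
    S2deg lam (n + 1) k x =
      (x + k) * S2deg lam n k x + S2deg lam n (k - 1) x - n * lam * S2deg lam n k x := by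
  obtain ⟨m, rfl⟩ : ∃ m, k = m + 1 := ⟨k - 1, by omega⟩
  have hstep : altChooseSum (m + 1) (fun l => dbinom lam (l + x) (n + 1)) =
      altChooseSum (m + 1) (fun l => ((l : ℝ) + (x - n * lam)) * dbinom lam (l + x) n) /
        (n + 1) := by
    simp only [altChooseSum, sum_div, dbinom_succ]
    exact sum_congr rfl fun l _ => by ring
  simp only [S2deg_eq_altChooseSum, Nat.add_sub_cancel, hstep, altChooseSum_succ_add_mul,
    Nat.factorial_succ]
  push_cast
  field_simp
  ring

/-- For `1 ≤ k ≤ n`: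
`S_{2,λ}(n+1,k|x) = (x+k) S_{2,λ}(n,k|x) + S_{2,λ}(n,k-1|x) − nλ S_{2,λ}(n,k|x)`. -/
theorem stmt7 (lam x : ℝ) (n k : ℕ) (hk : 1 ≤ k) (hkn : k ≤ n) :
    S2deg lam (n + 1) k x =
      (x + k) * S2deg lam n k x + S2deg lam n (k - 1) x - n * lam * S2deg lam n k x :=
  stmt7_general lam x n k hk
end

section
/- For n ≥ 0 and r ≥ 1, the higher-order Carlitz degenerate Euler polynomials satisfy ℰ^{(r)}_{n,λ}(x) = ∑_{l=0}^n C(r+l-1, l) 2^{-l} (-1)^l l! S_{2,λ}(n,l|x). -/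
open Finset PowerSeries

/-! Write `(1+λt)^{1/λ} + 1 = 2(1 - a)` with `a = -((1+λt)^{1/λ} - 1)/2`, a series without
constant term. Then `(2/((1+λt)^{1/λ}+1))^r` is `(1 - X)^{-r} = ∑ C(r+l-1,l) X^l` with `a`
substituted for `X`, and multiplying by `(1+λt)^{x/λ}` turns each `a^l` into
`(-1/2)^l l! ∑_n S_{2,λ}(n,l|x) t^n/n!`. -/

namespace PowerSeries

variable {R : Type*} [CommRing R]

theorem coeff_pow_mul_eq_zero_of_lt {a : R⟦X⟧} (ha : constantCoeff a = 0) (f : R⟦X⟧)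
    {n l : ℕ} (h : n < l) : coeff n (a ^ l * f) = 0 := by
  obtain ⟨b, rfl⟩ := X_dvd_iff.mpr ha
  rw [mul_pow, mul_assoc, coeff_X_pow_mul', if_neg (by omega)]

theorem coeff_mul_subst {a : R⟦X⟧} (ha : constantCoeff a = 0) (g f : R⟦X⟧) (n : ℕ) :
    coeff n (g * f.subst a) = ∑ l ∈ range (n + 1), coeff l f * coeff n (g * a ^ l) := by
  have hsub : HasSubst a := HasSubst.of_constantCoeff_zero' ha
  have htrunc : (trunc (n + 1) f : R⟦X⟧).subst a =
      ∑ l ∈ range (n + 1), coeff l f • a ^ l := by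
    rw [subst_coe hsub, Polynomial.aeval_eq_sum_range' (natDegree_trunc_lt f n)]
    refine sum_congr rfl fun l hl => ?_
    rw [coeff_trunc, if_pos (mem_range.mp hl)]
  -- the tail `X ^ (n + 1) * _` of `f` becomes `a ^ (n + 1) * _`, invisible in degree `n`
  conv_lhs => rw [eq_X_pow_mul_shift_add_trunc (n + 1) f, subst_add hsub, subst_mul hsub,
    subst_pow hsub, subst_X hsub, htrunc, mul_add, mul_left_comm, map_add,
    coeff_pow_mul_eq_zero_of_lt ha _ n.lt_succ_self, zero_add, mul_sum, map_sum]
  refine sum_congr rfl fun l _ => ?_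
  rw [mul_smul_comm, coeff_smul, smul_eq_mul]

theorem coeff_invOneSubPow_val (d l : ℕ) :
    coeff l (invOneSubPow R d).val = ((d + l - 1).choose l : R) := by
  rcases d with _ | d
  · rcases l with _ | l
    · simp [invOneSubPow_zero]
    · simp [invOneSubPow_zero, coeff_one]
  · rw [invOneSubPow_val_succ_eq_mk_add_choose, coeff_mk, add_right_comm, Nat.add_sub_cancel,
      Nat.choose_symm_add]

theorem one_sub_pow_mul_subst_invOneSubPow {a : R⟦X⟧} (ha : constantCoeff a = 0) (d : ℕ) :
    (1 - a) ^ d * (invOneSubPow R d).val.subst a = 1 := by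
  have hsub : HasSubst a := HasSubst.of_constantCoeff_zero' ha
  calc (1 - a) ^ d * (invOneSubPow R d).val.subst a
      = substAlgHom hsub ((1 - X) ^ d * (invOneSubPow R d).val) := by
        rw [map_mul, map_pow, map_sub, map_one, substAlgHom_X, coe_substAlgHom]
    _ = 1 := by rw [← invOneSubPow_inv_eq_one_sub_pow, (invOneSubPow R d).inv_val, map_one]

theorem eq_mul_subst_invOneSubPow_of_smul_one_sub_pow_mul_eq {K : Type*} [Field K]
    {a F G : K⟦X⟧} (ha : constantCoeff a = 0) {c : K} (hc : c ≠ 0) {d : ℕ}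
    (h : (c • (1 - a)) ^ d * F = c ^ d • G) :
    F = G * (invOneSubPow K d).val.subst a := by
  refine smul_right_injective _ (pow_ne_zero d hc) ?_
  calc c ^ d • F = c ^ d • F * ((1 - a) ^ d * (invOneSubPow K d).val.subst a) := by
        rw [one_sub_pow_mul_subst_invOneSubPow ha, mul_one]
    _ = (c • (1 - a)) ^ d * F * (invOneSubPow K d).val.subst a := by
        rw [smul_pow]
        simp only [smul_mul_assoc]
        congr 1
        ring
    _ = c ^ d • (G * (invOneSubPow K d).val.subst a) := by rw [h, smul_mul_assoc]

end PowerSeries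

theorem constantCoeff_degExp (lam y : ℝ) : constantCoeff (degExp lam y) = 1 := by
  simp [← coeff_zero_eq_constantCoeff_apply, degExp, dbinom]

theorem stmt8_general (lam x : ℝ) (r : ℕ)
    (E : ℕ → ℝ) (S : ℕ → ℕ → ℝ)
    (hE : ((degExp lam 1 + 1) ^ r) * PowerSeries.mk (fun n => E n / n.factorial) =
      ((2 : ℝ) ^ r) • degExp lam x)
    (hS : ∀ l : ℕ, degExp lam x * (degExp lam 1 - 1) ^ l =
      (l.factorial : ℝ) • PowerSeries.mk (fun n => S n l / n.factorial)) :
    ∀ n : ℕ, E n =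
      ∑ l ∈ range (n + 1),
        ((r + l - 1).choose l : ℝ) * ((2 : ℝ)⁻¹) ^ l * (-1) ^ l * (l.factorial : ℝ) *
          S n l := by
  set a : ℝ⟦X⟧ := (-2⁻¹ : ℝ) • (degExp lam 1 - 1)
  have ha : constantCoeff a = 0 := by simp [a, constantCoeff_degExp]
  have hsum : degExp lam 1 + 1 = (2 : ℝ) • (1 - a) := by
    simp only [a]
    module
  rw [hsum] at hE
  have hEB := eq_mul_subst_invOneSubPow_of_smul_one_sub_pow_mul_eq ha two_ne_zero hE
  intro n
  have hcoeff := congrArg (coeff n) hEB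
  rw [coeff_mk, coeff_mul_subst ha, div_eq_iff (by positivity)] at hcoeff
  rw [hcoeff, sum_mul]
  refine sum_congr rfl fun l _ => ?_
  rw [smul_pow, mul_smul_comm, hS l, coeff_smul, coeff_smul, coeff_mk, coeff_invOneSubPow_val,
    neg_pow, smul_eq_mul, smul_eq_mul]
  field_simp

/-- If `E` gives the higher-order Carlitz degenerate Euler polynomials at `x`, i.e.
`(2/((1+λt)^{1/λ}+1))^r (1+λt)^{x/λ} = ∑_n E_n t^n/n!`, and `S n l` are the degenerate
Stirling polynomials of the second kind at `x`, i.e.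
`(1/l!)(1+λt)^{x/λ}((1+λt)^{1/λ}-1)^l = ∑_n S(n,l) t^n/n!`, then for `r ≥ 1` and `n ≥ 0`:
`E_n = ∑_{l=0}^n C(r+l-1,l) 2^{-l} (-1)^l l! S(n,l)`. -/
theorem stmt8 (lam x : ℝ) (hlam : lam ≠ 0) (r : ℕ) (hr : 1 ≤ r)
    (E : ℕ → ℝ) (S : ℕ → ℕ → ℝ)
    (hE : ((degExp lam 1 + 1) ^ r) * PowerSeries.mk (fun n => E n / n.factorial) =
      ((2 : ℝ) ^ r) • degExp lam x)
    (hS : ∀ l : ℕ, degExp lam x * (degExp lam 1 - 1) ^ l =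
      (l.factorial : ℝ) • PowerSeries.mk (fun n => S n l / n.factorial)) :
    ∀ n : ℕ, E n =
      ∑ l ∈ range (n + 1),
        ((r + l - 1).choose l : ℝ) * ((2 : ℝ)⁻¹) ^ l * (-1) ^ l * (l.factorial : ℝ) *
          S n l :=
  stmt8_general lam x r E S hE hS
end

section
/- For m ≥ 1 and n, k, r ≥ 0, the r-Whitney number of the second kind satisfies W_{m,r}(n,k) = ∑_{i=k}^n C(n,i) r^{n-i} S_2(i,k) m^{i-k}. -/
open Finset Polynomial

lemma S2_zero (n k : ℕ) (h : n < k) : S2 n k = 0 := by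
  induction n generalizing k with
  | zero => cases k with | zero => omega | succ k => rfl
  | succ n ih =>
    cases k with
    | zero => omega
    | succ k => simp [S2, ih k (by omega), ih (k+1) (by omega)]

lemma pow_eq_sum (j n : ℕ) :
    j ^ n = ∑ k ∈ range (n + 1), S2 n k * j.descFactorial k := by
  induction n with
  | zero => simp [S2]
  | succ n ih =>
    have key : ∀ k, j * j.descFactorial k
        = j.descFactorial (k+1) + k * j.descFactorial k := by
      intro k
      rcases le_or_gt k j with h | h
      · rw [Nat.descFactorial_succ]
        have : j = (j - k) + k := by omega
        nth_rewrite 1 [this]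
        ring
      · simp [Nat.descFactorial_eq_zero_iff_lt.2 h,
          Nat.descFactorial_eq_zero_iff_lt.2 (by omega : j < k + 1)]
    calc j ^ (n+1) = ∑ k ∈ range (n+1), S2 n k * (j * j.descFactorial k) := by
          rw [pow_succ, ih, Finset.sum_mul]
          exact Finset.sum_congr rfl fun k _ => by ring
      _ = (∑ k ∈ range (n+1), S2 n k * j.descFactorial (k+1))
          + ∑ k ∈ range (n+1), k * S2 n k * j.descFactorial k := by
          simp only [key]; rw [← Finset.sum_add_distrib]
          exact Finset.sum_congr rfl fun k _ => by ring
      _ = ∑ k ∈ range (n+2), S2 (n+1) k * j.descFactorial k := by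
          rw [Finset.sum_range_succ' (fun k => S2 (n+1) k * j.descFactorial k)]
          simp only [S2, zero_mul, add_zero]
          have hB : (∑ k ∈ range (n+1), k * S2 n k * j.descFactorial k)
              = ∑ x ∈ range (n+1), (x+1) * S2 n (x+1) * j.descFactorial (x+1) := by
            rw [Finset.sum_range_succ' (fun k => k * S2 n k * j.descFactorial k),
              Finset.sum_range_succ (fun x => ((x:ℕ)+1) * S2 n (x+1) * j.descFactorial (x+1)),
              S2_zero n (n+1) (by omega)]
            simp
          have hsplit : ∀ x ∈ range (n+1),
              ((x+1) * S2 n (x+1) + S2 n x) * j.descFactorial (x+1)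
              = S2 n x * j.descFactorial (x+1) + (x+1) * S2 n (x+1) * j.descFactorial (x+1) :=
            fun x _ => by ring
          rw [Finset.sum_congr rfl hsplit, Finset.sum_add_distrib, hB]

lemma eval_prod_desc (k j : ℕ) :
    Polynomial.eval (j:ℚ) (∏ i ∈ range k, (X - Polynomial.C (i:ℚ)))
      = (j.descFactorial k : ℚ) := by
  induction k with
  | zero => simp
  | succ k ih =>
    rw [Finset.prod_range_succ, Polynomial.eval_mul, ih, Nat.descFactorial_succ]
    rcases le_or_gt k j with h | h
    · simp only [Polynomial.eval_sub, Polynomial.eval_X, Polynomial.eval_C]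
      push_cast [h]; ring
    · simp [Nat.descFactorial_eq_zero_iff_lt.2 h]

/-- If `W` is the family of r-Whitney numbers of the second kind, defined by the
polynomial identity `(mx+r)^n = ∑_{k=0}^n m^k W(n,k) (x)_k`, then for `k ≤ n`,
`W(n,k) = ∑_{i=k}^n C(n,i) r^{n-i} S_2(i,k) m^{i-k}`. -/
theorem stmt9 (m r : ℕ) (hm : 1 ≤ m) (W : ℕ → ℕ → ℚ)
    (hW : ∀ n : ℕ, (C (m : ℚ) * X + C (r : ℚ)) ^ n =
      ∑ k ∈ range (n + 1), C ((m : ℚ) ^ k * W n k) * ∏ i ∈ range k, (X - C (i : ℚ))) :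
    ∀ n k : ℕ, k ≤ n →
      W n k = ∑ i ∈ Icc k n,
        (n.choose i : ℚ) * (r : ℚ) ^ (n - i) * (S2 i k : ℚ) * (m : ℚ) ^ (i - k) := by
  intro n k hk
  set Wc : ℕ → ℚ := fun t => ∑ i ∈ Icc t n,
      (n.choose i : ℚ) * (r : ℚ) ^ (n - i) * (S2 i t : ℚ) * (m : ℚ) ^ (i - t) with hWc
  have hIcc : ∀ t : ℕ, Icc t n = (range (n+1)).filter (fun i => t ≤ i) := by
    intro t; ext i; simp [Nat.lt_succ_iff]; omega
  have hEvalW : ∀ j : ℕ, ∑ t ∈ range (n+1),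
      (m:ℚ)^t * W n t * (j.descFactorial t : ℚ) = ((m:ℚ) * j + r)^n := by
    intro j
    have h := congrArg (Polynomial.eval (j:ℚ)) (hW n)
    simp only [Polynomial.eval_finset_sum, Polynomial.eval_pow, Polynomial.eval_add,
      Polynomial.eval_mul, Polynomial.eval_C, Polynomial.eval_X, eval_prod_desc] at h
    exact h.symm
  have hEvalWc : ∀ j : ℕ, ∑ t ∈ range (n+1),
      (m:ℚ)^t * Wc t * (j.descFactorial t : ℚ) = ((m:ℚ) * j + r)^n := by
    intro j
    calc ∑ t ∈ range (n+1), (m:ℚ)^t * Wc t * (j.descFactorial t : ℚ)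
        = ∑ t ∈ range (n+1), ∑ i ∈ range (n+1),
            (if t ≤ i then ((n.choose i : ℚ) * (r:ℚ)^(n-i) * (m:ℚ)^i)
              * ((S2 i t : ℚ) * (j.descFactorial t : ℚ)) else 0) := by
          refine Finset.sum_congr rfl fun t ht => ?_
          rw [hWc]
          simp only [hIcc t, Finset.sum_filter, Finset.mul_sum, Finset.sum_mul]
          refine Finset.sum_congr rfl fun i hi => ?_
          by_cases h : t ≤ i
          · simp only [if_pos h]
            have hpow : (m:ℚ)^(i-t) * (m:ℚ)^t = (m:ℚ)^i := by
              rw [← pow_add]; congr 1; omega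
            calc (m:ℚ)^t * ((n.choose i:ℚ) * (r:ℚ)^(n-i) * (S2 i t:ℚ) * (m:ℚ)^(i-t))
                  * (j.descFactorial t:ℚ)
                = ((n.choose i:ℚ) * (r:ℚ)^(n-i)) * ((m:ℚ)^(i-t) * (m:ℚ)^t)
                  * ((S2 i t:ℚ) * (j.descFactorial t:ℚ)) := by ring
              _ = _ := by rw [hpow]
          · simp [h]
      _ = ∑ i ∈ range (n+1), ((n.choose i:ℚ) * (r:ℚ)^(n-i) * (m:ℚ)^i)
            * ∑ t ∈ range (i+1), (S2 i t : ℚ) * (j.descFactorial t : ℚ) := by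
          rw [Finset.sum_comm]
          refine Finset.sum_congr rfl fun i hi => ?_
          have hfil : (range (n+1)).filter (fun t => t ≤ i) = range (i+1) := by
            have : i ≤ n := by simpa [Nat.lt_succ_iff] using hi
            ext t; simp [Nat.lt_succ_iff]; omega
          rw [← Finset.sum_filter, hfil, Finset.mul_sum]
      _ = ∑ i ∈ range (n+1), ((n.choose i:ℚ) * (r:ℚ)^(n-i) * (m:ℚ)^i) * (j:ℚ)^i := by
          refine Finset.sum_congr rfl fun i _ => ?_
          congr 1
          calc ∑ t ∈ range (i+1), (S2 i t : ℚ) * (j.descFactorial t : ℚ)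
              = ((∑ t ∈ range (i+1), S2 i t * j.descFactorial t : ℕ) : ℚ) := by
                push_cast; rfl
            _ = (j:ℚ)^i := by rw [← pow_eq_sum]; push_cast; rfl
      _ = ((m:ℚ) * j + r)^n := by
          rw [add_pow]
          refine Finset.sum_congr rfl fun i _ => ?_
          rw [mul_pow]; ring
  set D : ℕ → ℚ := fun t => (m:ℚ)^t * W n t - (m:ℚ)^t * Wc t with hD
  have hsum : ∀ j : ℕ, ∑ t ∈ range (n+1), D t * (j.descFactorial t : ℚ) = 0 := by
    intro j
    simp only [hD, sub_mul]
    rw [Finset.sum_sub_distrib, hEvalW j, hEvalWc j, sub_self]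
  have hDzero : ∀ t, t ≤ n → D t = 0 := by
    intro t
    induction t using Nat.strong_induction_on with
    | _ t ih =>
      intro ht
      have h := hsum t
      rw [Finset.sum_eq_single t] at h
      · have hfac : (t.descFactorial t : ℚ) ≠ 0 := by
          rw [Nat.descFactorial_self]
          exact_mod_cast Nat.factorial_ne_zero t
        exact (mul_eq_zero.1 h).resolve_right hfac
      · intro b hb hbt
        rcases lt_or_gt_of_ne hbt with hlt | hgt
        · rw [ih b hlt (by omega), zero_mul]
        · rw [Nat.descFactorial_eq_zero_iff_lt.2 hgt]; simp
      · intro hcon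
        exact absurd (Finset.mem_range.2 (by omega)) hcon
  have hk0 := hDzero k hk
  have hmne : (m:ℚ)^k ≠ 0 := pow_ne_zero _ (Nat.cast_ne_zero.2 (by omega))
  rw [hD] at hk0
  have := sub_eq_zero.1 hk0
  exact mul_left_cancel₀ hmne this
end

section
/- For m ≥ 1 and n ≥ k ≥ 0 and r ≥ 0, the r-Whitney number of the second kind satisfies m^k k! W_{m,r}(n,k) = ∑_{l=0}^k C(k,l)(-1)^{k-l} (lm+r)^n. Moreover, for n < k this alternating sum is zero. -/
open Finset

/-- r-Whitney numbers of the second kind: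
`W_{m,r}(n,k) = ∑_{i=k}^n C(n,i) r^{n-i} S_2(i,k) m^{i-k}`. -/
def whitney (m r n k : ℕ) : ℕ :=
  ∑ i ∈ Icc k n, n.choose i * r ^ (n - i) * S2 i k * m ^ (i - k)

lemma S2_eq_zero : ∀ {n k : ℕ}, n < k → S2 n k = 0
  | 0, _ + 1, _ => rfl
  | n + 1, k + 1, h => by
    have h1 : n < k + 1 := by omega
    have h2 : n < k := by omega
    simp [S2, S2_eq_zero h1, S2_eq_zero h2]

lemma shiftB (i k : ℕ) :
    ∑ l ∈ range (k + 1), (k.choose l : ℤ) * (-1) ^ (k + l) * ((l : ℤ) + 1) ^ i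
      = (∑ l ∈ range (k + 2), ((k + 1).choose l : ℤ) * (-1) ^ (k + 1 + l) * (l : ℤ) ^ i)
        + ∑ l ∈ range (k + 1), (k.choose l : ℤ) * (-1) ^ (k + l) * (l : ℤ) ^ i := by
  rw [Finset.sum_range_succ' (fun l => ((k + 1).choose l : ℤ) * (-1) ^ (k + 1 + l) * (l : ℤ) ^ i)]
  rw [Finset.sum_range_succ' (fun l => (k.choose l : ℤ) * (-1) ^ (k + l) * (l : ℤ) ^ i)]
  push_cast
  simp only [Nat.add_zero, Nat.choose_zero_right, Nat.cast_one]
  have h3 : ∀ j, (-1 : ℤ) ^ (k + (j + 1)) = -(-1 : ℤ) ^ (k + j) := by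
    intro j; rw [show k + (j + 1) = (k + j) + 1 by ring, pow_succ]; ring
  have h1 : ∑ j ∈ range (k + 1),
        ((k + 1).choose (j + 1) : ℤ) * (-1) ^ (k + 1 + (j + 1)) * ((j : ℤ) + 1) ^ i
      = ∑ j ∈ range (k + 1), ((k.choose j : ℤ) * (-1) ^ (k + j) * ((j : ℤ) + 1) ^ i
          + (k.choose (j + 1) : ℤ) * (-1) ^ (k + j) * ((j : ℤ) + 1) ^ i) := by
    refine Finset.sum_congr rfl fun j _ => ?_
    have hP : ((k + 1).choose (j + 1) : ℤ) = k.choose j + k.choose (j + 1) := by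
      rw [Nat.choose_succ_succ]; push_cast; ring
    have hs : (-1 : ℤ) ^ (k + 1 + (j + 1)) = (-1) ^ (k + j) := by
      rw [show k + 1 + (j + 1) = k + j + 2 by ring, pow_add]; norm_num
    rw [hP, hs]; ring
  have h2 : ∑ j ∈ range (k + 1), (k.choose (j + 1) : ℤ) * (-1) ^ (k + j) * ((j : ℤ) + 1) ^ i
      = ∑ j ∈ range k, (k.choose (j + 1) : ℤ) * (-1) ^ (k + j) * ((j : ℤ) + 1) ^ i := by
    rw [Finset.sum_range_succ, Nat.choose_succ_self]; simp
  have hneg : ∑ j ∈ range k, (k.choose (j + 1) : ℤ) * (-1) ^ (k + (j + 1)) * ((j : ℤ) + 1) ^ i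
      = -∑ j ∈ range k, (k.choose (j + 1) : ℤ) * (-1) ^ (k + j) * ((j : ℤ) + 1) ^ i := by
    rw [← Finset.sum_neg_distrib]
    exact Finset.sum_congr rfl fun j _ => by rw [h3 j]; ring
  have h4 : (-1 : ℤ) ^ (k + 1) = -(-1 : ℤ) ^ k := by rw [pow_succ]; ring
  rw [h1, Finset.sum_add_distrib, h2, hneg, h4]
  ring

lemma keyA : ∀ (i k : ℕ),
    ∑ l ∈ range (k + 1), (k.choose l : ℤ) * (-1) ^ (k + l) * (l : ℤ) ^ i
      = (k.factorial : ℤ) * S2 i k := by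
  intro i
  induction i with
  | zero =>
    intro k
    have : ∑ l ∈ range (k + 1), (k.choose l : ℤ) * (-1) ^ (k + l) * (l : ℤ) ^ 0
        = (-1) ^ k * ∑ l ∈ range (k + 1), (-1) ^ l * (k.choose l : ℤ) := by
      rw [Finset.mul_sum]
      refine Finset.sum_congr rfl fun l _ => ?_
      rw [pow_add]; ring
    rw [this, Int.alternating_sum_range_choose]
    cases k with
    | zero => simp [S2]
    | succ k => simp [S2_eq_zero (Nat.succ_pos k)]
  | succ i ih =>
    intro k
    cases k with
    | zero => simp [S2, S2_eq_zero (Nat.succ_pos i)]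
    | succ k =>
      rw [Finset.sum_range_succ'
        (fun l => ((k + 1).choose l : ℤ) * (-1) ^ (k + 1 + l) * (l : ℤ) ^ (i + 1))]
      push_cast
      simp only [Nat.add_zero, Nat.choose_zero_right, Nat.cast_one]
      rw [zero_pow (Nat.succ_ne_zero i), mul_zero, add_zero]
      have hterm : ∀ j,
          ((k + 1).choose (j + 1) : ℤ) * (-1) ^ (k + 1 + (j + 1)) * ((j : ℤ) + 1) ^ (i + 1)
            = ((k : ℤ) + 1) * ((k.choose j : ℤ) * (-1) ^ (k + j) * ((j : ℤ) + 1) ^ i) := by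
        intro j
        have hc : ((k + 1).choose (j + 1) : ℤ) * ((j : ℤ) + 1) = ((k : ℤ) + 1) * k.choose j := by
          exact_mod_cast congrArg (Nat.cast (R := ℤ)) (Nat.add_one_mul_choose_eq k j).symm
        have hsgn : (-1 : ℤ) ^ (k + 1 + (j + 1)) = (-1) ^ (k + j) := by
          rw [show k + 1 + (j + 1) = k + j + 2 by ring, pow_add]; norm_num
        rw [hsgn, pow_succ ((j : ℤ) + 1) i]
        calc ((k + 1).choose (j + 1) : ℤ) * (-1) ^ (k + j) * (((j : ℤ) + 1) ^ i * ((j : ℤ) + 1))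
            = (((k + 1).choose (j + 1) : ℤ) * ((j : ℤ) + 1))
                * ((-1) ^ (k + j) * ((j : ℤ) + 1) ^ i) := by ring
          _ = (((k : ℤ) + 1) * k.choose j) * ((-1) ^ (k + j) * ((j : ℤ) + 1) ^ i) := by rw [hc]
          _ = ((k : ℤ) + 1) * ((k.choose j : ℤ) * (-1) ^ (k + j) * ((j : ℤ) + 1) ^ i) := by ring
      have hstep : ∑ j ∈ range (k + 1),
            ((k + 1).choose (j + 1) : ℤ) * (-1) ^ (k + 1 + (j + 1)) * ((j : ℤ) + 1) ^ (i + 1)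
          = ((k : ℤ) + 1) * ∑ j ∈ range (k + 1),
              (k.choose j : ℤ) * (-1) ^ (k + j) * ((j : ℤ) + 1) ^ i := by
        rw [Finset.mul_sum]
        exact Finset.sum_congr rfl fun j _ => hterm j
      rw [hstep, shiftB, ih (k + 1), ih k]
      rw [show S2 (i + 1) (k + 1) = (k + 1) * S2 i (k + 1) + S2 i k from rfl,
        Nat.factorial_succ]
      push_cast
      ring

/-- For `m ≥ 1`: if `n ≥ k` then
`m^k k! W_{m,r}(n,k) = ∑_{l=0}^k C(k,l)(-1)^{k-l}(lm+r)^n`,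
and if `n < k` this alternating sum is zero. -/
theorem stmt11 (m r n k : ℕ) (hm : 1 ≤ m) :
    (k ≤ n → ((m : ℤ) ^ k * (k.factorial : ℤ) * (whitney m r n k : ℤ) =
      ∑ l ∈ range (k + 1), (k.choose l : ℤ) * (-1) ^ (k - l) * ((l : ℤ) * m + r) ^ n)) ∧
    (n < k → ∑ l ∈ range (k + 1),
      (k.choose l : ℤ) * (-1) ^ (k - l) * ((l : ℤ) * m + r) ^ n = 0) := by
  have hsum : ∑ l ∈ range (k + 1), (k.choose l : ℤ) * (-1) ^ (k - l) * ((l : ℤ) * m + r) ^ n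
      = ∑ i ∈ range (n + 1),
          (n.choose i : ℤ) * (r : ℤ) ^ (n - i) * (m : ℤ) ^ i * ((k.factorial : ℤ) * S2 i k) := by
    have step1 : ∀ l ∈ range (k + 1),
        (k.choose l : ℤ) * (-1) ^ (k - l) * ((l : ℤ) * m + r) ^ n
          = ∑ i ∈ range (n + 1),
              (k.choose l : ℤ) * (-1) ^ (k + l)
                * (((l : ℤ) * m) ^ i * (r : ℤ) ^ (n - i) * n.choose i) := by
      intro l hl
      have hlk : l ≤ k := Nat.lt_succ_iff.mp (Finset.mem_range.mp hl)
      have hsgn : (-1 : ℤ) ^ (k - l) = (-1) ^ (k + l) := by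
        rw [show k + l = (k - l) + 2 * l by omega, pow_add, pow_mul]; norm_num
      rw [hsgn, add_pow, Finset.mul_sum]
    rw [Finset.sum_congr rfl step1, Finset.sum_comm]
    refine Finset.sum_congr rfl fun i _ => ?_
    rw [← keyA i k, Finset.mul_sum]
    refine Finset.sum_congr rfl fun l _ => ?_
    rw [mul_pow]
    ring
  constructor
  · intro hkn
    rw [hsum]
    have hsub : Icc k n ⊆ range (n + 1) := by
      intro i hi
      rw [Finset.mem_range]
      exact Nat.lt_succ_of_le (Finset.mem_Icc.mp hi).2
    rw [← Finset.sum_subset hsub (fun i hi hni => by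
      have hik : i < k := by
        rw [Finset.mem_range] at hi
        rw [Finset.mem_Icc] at hni
        omega
      rw [S2_eq_zero hik]
      simp)]
    rw [show ((whitney m r n k : ℤ)) = ∑ i ∈ Icc k n,
        (n.choose i : ℤ) * (r : ℤ) ^ (n - i) * (S2 i k : ℤ) * (m : ℤ) ^ (i - k) by
      unfold whitney; push_cast; rfl]
    rw [Finset.mul_sum]
    refine Finset.sum_congr rfl fun i hi => ?_
    have hki : k ≤ i := (Finset.mem_Icc.mp hi).1
    have hpow : (m : ℤ) ^ k * (m : ℤ) ^ (i - k) = (m : ℤ) ^ i := by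
      rw [← pow_add, Nat.add_sub_cancel' hki]
    calc (m : ℤ) ^ k * (k.factorial : ℤ)
          * ((n.choose i : ℤ) * (r : ℤ) ^ (n - i) * (S2 i k : ℤ) * (m : ℤ) ^ (i - k))
        = ((m : ℤ) ^ k * (m : ℤ) ^ (i - k))
            * ((k.factorial : ℤ) * ((n.choose i : ℤ) * (r : ℤ) ^ (n - i) * (S2 i k : ℤ))) := by
          ring
      _ = (m : ℤ) ^ i
            * ((k.factorial : ℤ) * ((n.choose i : ℤ) * (r : ℤ) ^ (n - i) * (S2 i k : ℤ))) := by
          rw [hpow]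
      _ = (n.choose i : ℤ) * (r : ℤ) ^ (n - i) * (m : ℤ) ^ i
            * ((k.factorial : ℤ) * S2 i k) := by ring
  · intro hnk
    rw [hsum]
    refine Finset.sum_eq_zero fun i hi => ?_
    have hik : i < k := by rw [Finset.mem_range] at hi; omega
    rw [S2_eq_zero hik]
    simp
end

section
/- For m ≥ 1, r ≥ 0 and 1 ≤ k ≤ n, the degenerate Whitney numbers satisfy the recurrence W_{m,r}(n+1,k|λ) = (r+mk) W_{m,r}(n,k|λ) + W_{m,r}(n,k-1|λ) − nλ W_{m,r}(n,k|λ). -/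
open Finset

/-- Degenerate Whitney numbers:
`W_{m,r}(n,k|λ) = (n!/(k! m^k)) ∑_{l=0}^k C(k,l)(-1)^{k-l} binom_λ(ml+r,n)`
(this expression vanishes when `n < k`). -/
noncomputable def whitneyDeg (lam : ℝ) (m r n k : ℕ) : ℝ :=
  (n.factorial : ℝ) / ((k.factorial : ℝ) * (m : ℝ) ^ k) *
    ∑ l ∈ range (k + 1), (k.choose l : ℝ) * (-1) ^ (k - l) * dbinom lam (m * l + r) n

/-!
Up to the factor `n!`, `binom_λ(ml + r, n)` is `P_n(l) = ∏_{i<n} (ml + r - iλ)`, so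
`W_{m,r}(n,k|λ) = Δ^k P_n(0) / (k! m^k)` with `Δ` the forward difference in `l`.
Since `P_{n+1}(l) = (r - nλ + ml) P_n(l)`, the recurrence is the Leibniz rule for a product
with a linear function: `Δ^k[(a + cx) f](0) = (a + ck) Δ^k f(0) + ck Δ^{k-1} f(0)`.
-/

open fwdDiff

lemma choose_succ_mul_neg_one_pow_mul_sub {R : Type*} [CommRing R] {j l : ℕ} (hl : l ≤ j + 1) :
    ((j + 1).choose l : R) * (-1) ^ (j + 1 - l) * (l - (j + 1)) =
      (j + 1) * (j.choose l * (-1) ^ (j - l)) := by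
  rcases hl.lt_or_eq with hl | rfl
  · have hchoose : ((j + 1).choose l : R) * (j + 1 - l : ℕ) = j.choose l * (j + 1) := by
      exact_mod_cast congrArg (Nat.cast (R := R)) (Nat.choose_mul_succ_eq j l).symm
    rw [Nat.cast_sub hl.le] at hchoose
    rw [show j + 1 - l = j - l + 1 by omega, pow_succ]
    push_cast at hchoose
    linear_combination (-1 : R) ^ (j - l) * hchoose
  · simp

lemma fwdDiff_iter_linear_mul_apply_zero {R : Type*} [CommRing R] (f : ℕ → R) (a c : R) (k : ℕ) :
    (Δ_[1])^[k] (fun x ↦ (a + c * x) * f x) 0 =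
      (a + c * k) * (Δ_[1])^[k] f 0 + c * k * (Δ_[1])^[k - 1] f 0 := by
  rcases k with _ | j
  · simp
  simp only [fwdDiff_iter_eq_sum_shift, zero_add, smul_eq_mul, mul_one, zsmul_eq_mul,
    Nat.add_sub_cancel]
  push_cast
  have hextend : ∑ l ∈ range (j + 1), ((-1 : R) ^ (j - l) * j.choose l) * f l =
      ∑ l ∈ range (j + 2), ((-1 : R) ^ (j - l) * j.choose l) * f l := by
    simp [Finset.sum_range_succ (n := j + 1)]
  rw [hextend, mul_sum, mul_sum, ← sum_add_distrib]
  refine sum_congr rfl fun l hl ↦ ?_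
  have hcoeff :=
    choose_succ_mul_neg_one_pow_mul_sub (R := R) (Nat.lt_succ_iff.mp (mem_range.mp hl))
  linear_combination c * f l * hcoeff

noncomputable def whitneyProd (lam : ℝ) (m r n l : ℕ) : ℝ :=
  ∏ i ∈ range n, ((m * l + r : ℝ) - i * lam)

lemma whitneyProd_succ (lam : ℝ) (m r n : ℕ) :
    whitneyProd lam m r (n + 1) = fun l ↦ ((r - n * lam) + m * l) * whitneyProd lam m r n l := by
  ext l
  simp only [whitneyProd, prod_range_succ]
  ring

lemma whitneyDeg_eq_fwdDiff (lam : ℝ) (m r n k : ℕ) :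
    whitneyDeg lam m r n k =
      (Δ_[1])^[k] (whitneyProd lam m r n) 0 / (k.factorial * (m : ℝ) ^ k) := by
  simp only [whitneyDeg, dbinom, fwdDiff_iter_eq_sum_shift, whitneyProd, zero_add, smul_eq_mul,
    mul_one, zsmul_eq_mul, mul_sum, sum_div]
  refine sum_congr rfl fun l _ ↦ ?_
  push_cast
  generalize ∏ i ∈ range n, ((m * l + r : ℝ) - i * lam) = P
  field_simp

theorem stmt15_general (lam : ℝ) (m r n k : ℕ) (hm : 1 ≤ m) (hk : 1 ≤ k) :
    whitneyDeg lam m r (n + 1) k =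
      ((r : ℝ) + (m : ℝ) * k) * whitneyDeg lam m r n k + whitneyDeg lam m r n (k - 1) -
        (n : ℝ) * lam * whitneyDeg lam m r n k := by
  obtain ⟨j, rfl⟩ : ∃ j, k = j + 1 := ⟨k - 1, by omega⟩
  have hm0 : (m : ℝ) ≠ 0 := by exact_mod_cast (by omega : m ≠ 0)
  rw [whitneyDeg_eq_fwdDiff, whitneyDeg_eq_fwdDiff, whitneyDeg_eq_fwdDiff, whitneyProd_succ,
    fwdDiff_iter_linear_mul_apply_zero, Nat.add_sub_cancel, Nat.factorial_succ, pow_succ]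
  push_cast
  field_simp
  ring

/-- For `m ≥ 1`, `r ≥ 0` and `1 ≤ k ≤ n`:
`W_{m,r}(n+1,k|λ) = (r+mk) W_{m,r}(n,k|λ) + W_{m,r}(n,k-1|λ) − nλ W_{m,r}(n,k|λ)`. -/
theorem stmt15 (lam : ℝ) (m r n k : ℕ) (hm : 1 ≤ m) (hk : 1 ≤ k) (hkn : k ≤ n) :
    whitneyDeg lam m r (n + 1) k =
      ((r : ℝ) + (m : ℝ) * k) * whitneyDeg lam m r n k + whitneyDeg lam m r n (k - 1) -
        (n : ℝ) * lam * whitneyDeg lam m r n k :=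
  stmt15_general lam m r n k hm hk
end
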